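/- arXiv:2006.10286 — 4 statements merged into one kernel-verified Lean document; each statement's English description precedes it below -/
import Mathlib

section
/- For d > 1, there is no map ω : [0,1] → [0,1]^d that is simultaneously continuous, open, and surjective. -/
/-!
Sending each point of the cube to the least point of its fibre gives a right inverse of `ω`.
Because `ω` is open, this section is continuous, so the cube, and with it `ℝ^d`, would inject
continuously into `[0,1]`. This is impossible for `d > 1`: removing a point disconnects an interval
but not `ℝ^d`.
-/

open Set Function

section LeastPreimage

variable {X Y : Type*} [ConditionallyCompleteLinearOrder X] [TopologicalSpace X] [OrderTopology X]
  [CompactSpace X] [TopologicalSpace Y] {ω : X → Y}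

theorem sInf_preimage_singleton_mem [T1Space Y] (hc : Continuous ω) (hs : Surjective ω) (y : Y) :
    sInf (ω ⁻¹' {y}) ∈ ω ⁻¹' {y} :=
  (isClosed_singleton.preimage hc).isCompact.sInf_mem (hs y)

theorem leftInverse_sInf_preimage_singleton [T1Space Y] (hc : Continuous ω) (hs : Surjective ω) :
    LeftInverse ω fun y => sInf (ω ⁻¹' {y}) :=
  sInf_preimage_singleton_mem hc hs

theorem sInf_preimage_singleton_lt_iff [T1Space Y] (hc : Continuous ω) (hs : Surjective ω)
    (y : Y) (b : X) : sInf (ω ⁻¹' {y}) < b ↔ y ∈ ω '' Iio b := by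
  refine ⟨fun h => ⟨_, h, sInf_preimage_singleton_mem hc hs y⟩, ?_⟩
  rintro ⟨x, hxb, rfl⟩
  exact (csInf_le (isClosed_singleton.preimage hc).isCompact.bddBelow rfl).trans_lt hxb

theorem lt_sInf_preimage_singleton_iff [T1Space Y] (hc : Continuous ω) (hs : Surjective ω)
    (y : Y) (a : X) : a < sInf (ω ⁻¹' {y}) ↔ y ∉ ω '' Iic a := by
  rw [← not_le, not_iff_not]
  refine ⟨fun h => ⟨_, h, sInf_preimage_singleton_mem hc hs y⟩, ?_⟩
  rintro ⟨x, hxa, rfl⟩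
  exact (csInf_le (isClosed_singleton.preimage hc).isCompact.bddBelow rfl).trans hxa

theorem continuous_sInf_preimage_singleton [T2Space Y] (hc : Continuous ω) (ho : IsOpenMap ω)
    (hs : Surjective ω) : Continuous fun y => sInf (ω ⁻¹' {y}) := by
  refine OrderTopology.continuous_iff.2 fun a => ⟨?_, ?_⟩
  · have : (fun y => sInf (ω ⁻¹' {y})) ⁻¹' Ioi a = (ω '' Iic a)ᶜ :=
      Set.ext (lt_sInf_preimage_singleton_iff hc hs · a)
    rw [this]
    exact ((isClosed_Iic.isCompact.image hc).isClosed).isOpen_compl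
  · have : (fun y => sInf (ω ⁻¹' {y})) ⁻¹' Iio a = ω '' Iio a :=
      Set.ext (sInf_preimage_singleton_lt_iff hc hs · a)
    rw [this]
    exact ho _ isOpen_Iio

end LeastPreimage

theorem Continuous.not_injective_of_one_lt_rank {E α : Type*} [AddCommGroup E] [Module ℝ E]
    [TopologicalSpace E] [ContinuousAdd E] [ContinuousSMul ℝ E] [LinearOrder α] [DenselyOrdered α]
    [TopologicalSpace α] [OrderClosedTopology α] {g : E → α} (hg : Continuous g)
    (hE : 1 < Module.rank ℝ E) : ¬ Injective g := by
  intro hinj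
  have : Nontrivial E := rank_pos_iff_nontrivial.1 (zero_lt_one.trans hE)
  obtain ⟨u, w, huw⟩ := exists_pair_ne E
  wlog hlt : g u < g w generalizing u w
  · exact this w u huw.symm ((hinj.ne huw).lt_or_gt.resolve_left hlt)
  obtain ⟨c, huc, hcw⟩ := exists_between hlt
  obtain ⟨v, -, rfl⟩ := (isPreconnected_univ.image g hg.continuousOn).Icc_subset
    (mem_image_of_mem g (mem_univ u)) (mem_image_of_mem g (mem_univ w)) ⟨huc.le, hcw.le⟩
  have hcompl := (isConnected_compl_singleton_of_one_lt_rank hE v).isPreconnected.image g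
    hg.continuousOn
  obtain ⟨v', hv', hgv'⟩ := hcompl.Icc_subset
    (mem_image_of_mem g (hinj.ne_iff.1 huc.ne : u ≠ v))
    (mem_image_of_mem g (hinj.ne_iff.1 hcw.ne' : w ≠ v)) ⟨huc.le, hcw.le⟩
  exact hv' (hinj hgv')

theorem exists_continuous_injective_cube (d : ℕ) :
    ∃ φ : (Fin d → ℝ) → Icc (0 : Fin d → ℝ) 1, Continuous φ ∧ Injective φ := by
  let σ : ℝ → ℝ := fun t => Real.arctan t / Real.pi + 1 / 2
  have hσ : ∀ t, σ t ∈ Icc (0 : ℝ) 1 := fun t => by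
    have h₁ : -(1 / 2) ≤ Real.arctan t / Real.pi := by
      rw [le_div_iff₀ Real.pi_pos]; linarith [Real.neg_pi_div_two_lt_arctan t]
    have h₂ : Real.arctan t / Real.pi ≤ 1 / 2 := by
      rw [div_le_iff₀ Real.pi_pos]; linarith [Real.arctan_lt_pi_div_two t]
    simp only [σ, mem_Icc]
    constructor <;> linarith
  have hσi : Injective σ := fun s t h =>
    Real.arctan_injective ((div_left_inj' Real.pi_ne_zero).1 (add_right_cancel h))
  refine ⟨fun x => ⟨fun i => σ (x i), fun i => (hσ (x i)).1, fun i => (hσ (x i)).2⟩, ?_, ?_⟩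
  · fun_prop
  · intro x y h
    funext i
    exact hσi (congrFun (congrArg Subtype.val h) i)

theorem stmt_3 (d : ℕ) (hd : 1 < d) :
    ¬ ∃ ω : (Set.Icc (0:ℝ) 1) → (Set.Icc (0 : Fin d → ℝ) 1),
      Continuous ω ∧ IsOpenMap ω ∧ Function.Surjective ω := by
  rintro ⟨ω, hc, ho, hs⟩
  obtain ⟨φ, hφc, hφi⟩ := exists_continuous_injective_cube d
  refine ((continuous_sInf_preimage_singleton hc ho hs).comp hφc).not_injective_of_one_lt_rank
    (by rw [rank_fin_fun]; exact_mod_cast hd) ?_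
  exact (leftInverse_sInf_preimage_singleton hc hs).injective.comp hφi
end

section
/- For the Gray code g_d(k) = k XOR ⌊k/2⌋ on {0,…,2^d−1}: if d is even, then g_d(2·(2^d−1)/3) = 2^d−1 and g_d(2·(2^d−1)/3 + 1) = 2^d−2. -/
lemma bitt (n : ℕ) : Nat.bit true n = 2 * n + 1 := by simp [Nat.bit_val]
lemma bitf (n : ℕ) : Nat.bit false n = 2 * n := by simp [Nat.bit_val]

lemma xor_step (a : ℕ) (h : (2*a) ^^^ a = 3*a) :
    (2*(4*a+1)) ^^^ (4*a+1) = 3*(4*a+1) := by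
  have e1 : 2*(4*a+1) = Nat.bit false (Nat.bit true (2*a)) := by
    rw [bitt, bitf]; ring
  have e2 : 4*a+1 = Nat.bit true (Nat.bit false a) := by
    rw [bitf, bitt]; ring
  rw [e1, e2, Nat.xor_bit, Nat.xor_bit, bitf, h]
  norm_num [bitt]; ring

lemma xor_main : ∀ (m a : ℕ), 3*a = 4^m - 1 → (2*a) ^^^ a = 3*a := by
  intro m
  induction m with
  | zero => intro a h; norm_num at h; subst h; simp
  | succ n ih =>
    intro a h
    have h4 : (4:ℕ)^(n+1) = 4 * 4^n := by ring
    have hp : (1:ℕ) ≤ 4^n := Nat.one_le_pow _ _ (by norm_num)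
    have hb : ∃ b, a = 4*b+1 ∧ 3*b = 4^n - 1 := ⟨(a-1)/4, by omega⟩
    obtain ⟨b, rfl, hb⟩ := hb
    exact (xor_step b (ih b hb)).trans (by omega)

theorem stmt_7 (d : ℕ) (hd : 0 < d) (hde : Even d) :
    (2 * (2 ^ d - 1) / 3) ^^^ (2 * (2 ^ d - 1) / 3) / 2 = 2 ^ d - 1 ∧
    (2 * (2 ^ d - 1) / 3 + 1) ^^^ (2 * (2 ^ d - 1) / 3 + 1) / 2 = 2 ^ d - 2 := by
  obtain ⟨m, rfl⟩ := hde
  have hm : 0 < m := by omega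
  have h4 : (2:ℕ)^(m+m) = 4^m := by rw [← two_mul, pow_mul]; norm_num
  have hdvd : 3 * ((4^m - 1)/3) = 4^m - 1 := by
    have h1 : (4:ℕ)^m % 3 = 1 := by simpa using Nat.pow_mod 4 m 3
    have hp : (1:ℕ) ≤ 4^m := Nat.one_le_pow _ _ (by norm_num)
    omega
  set s := (4^m - 1)/3 with hs
  have hk : 2 * (2^(m+m) - 1) / 3 = 2 * s := by
    rw [h4]
    omega
  have hxor : (2*s) ^^^ s = 4^m - 1 := by
    rw [xor_main m s (by omega)]; omega
  have hhalf : 2 * s / 2 = s := by omega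
  constructor
  · rw [hk, hhalf, hxor, h4]
  · rw [hk]
    have hhalf2 : (2*s+1)/2 = s := by omega
    rw [hhalf2]
    have e1 : 2*s+1 = (2*s) ^^^ 1 := by
      have : (2*s) ^^^ 1 = Nat.bit false s ^^^ Nat.bit true 0 := by
        rw [bitf, bitt]
      rw [this, Nat.xor_bit]
      norm_num [bitt]
    rw [e1, Nat.xor_assoc, Nat.xor_comm 1 s, ← Nat.xor_assoc, hxor]
    -- (4^m - 1) ^^^ 1 = 4^m - 2
    have hp : (4:ℕ) ≤ 4^m := by
      calc (4:ℕ) = 4^1 := by norm_num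
      _ ≤ 4^m := Nat.pow_le_pow_right (by norm_num) hm
    obtain ⟨n, rfl⟩ : ∃ n, m = n+1 := ⟨m-1, by omega⟩
    have he : (4:ℕ)^(n+1) = 4 * 4^n := by ring
    have hp2 : (1:ℕ) ≤ 4^n := Nat.one_le_pow _ _ (by norm_num)
    have e2 : (4:ℕ)^(n+1) - 1 = Nat.bit true ((4^(n+1)-2)/2) := by
      rw [bitt]; omega
    have e3 : (1:ℕ) = Nat.bit true 0 := by rw [bitt]
    rw [e2, e3, Nat.xor_bit]
    norm_num [bitf]
    rw [h4]
    omega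
end

section
/- For the Gray code g_d(k) = k XOR ⌊k/2⌋ on {0,…,2^d−1}: if d is odd, then g_d((2^{d+1}−1)/3) = 2^d−1 and g_d((2^{d+1}−1)/3 − 1) = 2^d−2. -/
private lemma lxor_even_even (x y : ℕ) : (2*x) ^^^ (2*y) = 2*(x ^^^ y) := by
  have := Nat.xor_bit false x false y
  simpa [Nat.bit, Nat.mul_comm] using this

private lemma lxor_odd_even (x y : ℕ) : (2*x+1) ^^^ (2*y) = 2*(x ^^^ y) + 1 := by
  have := Nat.xor_bit true x false y
  simpa [Nat.bit, Nat.mul_comm] using this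

private lemma G1 (a c : ℕ) (h : a = 2*c+1) : (2*a) ^^^ a = 2*(a ^^^ c) + 1 := by
  subst h
  rw [Nat.xor_comm, lxor_odd_even, Nat.xor_comm c]

private lemma G2 (b : ℕ) : (4*b+1) ^^^ (2*b) = 2*((2*b) ^^^ b) + 1 := by
  rw [show 4*b+1 = 2*(2*b)+1 by ring, lxor_odd_even]

private lemma G3 (b : ℕ) : (4*b) ^^^ (2*b) = 2*((2*b) ^^^ b) := by
  rw [show 4*b = 2*(2*b) by ring, lxor_even_even]

private lemma pow4 (m : ℕ) : ∃ t, 4^m = 3*t+1 := by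
  induction m with
  | zero => exact ⟨0, rfl⟩
  | succ n ih =>
    obtain ⟨t, ht⟩ := ih
    exact ⟨4*t+1, by rw [pow_succ, ht]; ring⟩

private lemma arec (m : ℕ) : (4^(m+2)-1)/3 = 4*((4^(m+1)-1)/3)+1 := by
  obtain ⟨t, ht⟩ := pow4 (m+1)
  have h2 : (4:ℕ)^(m+2) = 4*4^(m+1) := by
    rw [pow_succ]; ring
  rw [h2, ht]
  omega

private lemma main (m : ℕ) :
    ((4^(m+1)-1)/3) ^^^ ((4^(m+1)-1)/3)/2 = 2^(2*m+1)-1 ∧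
    (2*((4^(m+1)-1)/3)) ^^^ ((4^(m+1)-1)/3) = 2^(2*m+2)-1 ∧
    ((4^(m+1)-1)/3) % 4 = 1 := by
  induction m with
  | zero =>
    refine ⟨by decide, by decide, by decide⟩
  | succ n ih =>
    obtain ⟨ih1, ih2, ih4⟩ := ih
    have hrec : (4^(n+2)-1)/3 = 4*((4^(n+1)-1)/3)+1 := arec n
    set b := (4^(n+1)-1)/3 with hb
    have hbc : b = 2*(b/2)+1 := by omega
    have hp : (1:ℕ) ≤ 2^(2*n+1) := Nat.one_le_two_pow
    have key : (2*b) ^^^ b = 2*(2^(2*n+1)-1)+1 := by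
      rw [G1 b (b/2) hbc, ih1]
    have e1 : (2:ℕ)^(2*(n+1)+1) = 2*2*2^(2*n+1) := by
      rw [show 2*(n+1)+1 = (2*n+1)+1+1 by ring, pow_succ, pow_succ]; ring
    have e2 : (2:ℕ)^(2*(n+1)+2) = 2*2*2*2^(2*n+1) := by
      rw [show 2*(n+1)+2 = (2*n+1)+1+1+1 by ring, pow_succ, pow_succ, pow_succ]; ring
    refine ⟨?_, ?_, ?_⟩
    · rw [hrec, show (4*b+1)/2 = 2*b by omega, G2, key]
      omega
    · rw [hrec, G1 (4*b+1) (2*b) (by ring), G2, key]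
      omega
    · rw [hrec]; omega

theorem stmt_8 (d : ℕ) (hdo : Odd d) :
    ((2 ^ (d + 1) - 1) / 3) ^^^ ((2 ^ (d + 1) - 1) / 3) / 2 = 2 ^ d - 1 ∧
    ((2 ^ (d + 1) - 1) / 3 - 1) ^^^ ((2 ^ (d + 1) - 1) / 3 - 1) / 2 = 2 ^ d - 2 := by
  obtain ⟨m, hm⟩ := hdo
  subst hm
  have h4 : (2:ℕ)^(2*m+1+1) = 4^(m+1) := by
    rw [show 2*m+1+1 = 2*(m+1) by ring, pow_mul]; norm_num
  rw [h4]
  obtain ⟨g1, g2, g4⟩ := main m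
  refine ⟨g1, ?_⟩
  cases m with
  | zero => decide
  | succ n =>
    obtain ⟨ih1, ih2, ih4⟩ := main n
    have hrec : (4^(n+2)-1)/3 = 4*((4^(n+1)-1)/3)+1 := arec n
    set b := (4^(n+1)-1)/3 with hb
    have hbc : b = 2*(b/2)+1 := by omega
    have hp : (1:ℕ) ≤ 2^(2*n+1) := Nat.one_le_two_pow
    have key : (2*b) ^^^ b = 2*(2^(2*n+1)-1)+1 := by
      rw [G1 b (b/2) hbc, ih1]
    rw [hrec, show 4*b+1-1 = 4*b by omega, show (4*b)/2 = 2*b by omega, G3, key]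
    have e1 : (2:ℕ)^(2*(n+1)+1) = 2*2*2^(2*n+1) := by
      rw [show 2*(n+1)+1 = (2*n+1)+1+1 by ring, pow_succ, pow_succ]; ring
    rw [e1]
    omega
end

section
/- With Z-order coordinates as above, for each α ∈ {0,…,2^d−1} the two points of the central 4×2×…×2 parallelepiped lying in octant α are exactly (α, ᾱ, …, ᾱ) and (α, ᾱ, …, ᾱ, ᾱ XOR 1), where ᾱ is the bitwise complement of α in d bits. -/
/-!
Write `N = 2 ^ (n - 1)`. In the box every coordinate but the first is `N - 1 = 01…1₂` or
`N = 10…0₂`, and the octant condition picks which one; so the top bit column is `α` and every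
other column is its complement `ᾱ`. The first coordinate ranges over `N - 2, …, N + 1`, and the
octant condition leaves `c` or `c ^^^ 1`, where `c ∈ {N - 1, N}` is the choice made for the
other coordinates. Flipping the lowest bit of the first coordinate changes only the last
column, by `^^^ 1`.
-/

/-- The `m`-th Z-order coordinate of a point `p ∈ {0,…,2^n−1}^d`. -/
def zord (d n : ℕ) (p : Fin d → ℕ) (m : ℕ) : ℕ :=
  ∑ j : Fin d, (if (p j).testBit (n - 1 - m) then 2 ^ (j : ℕ) else 0)

/-- The central `4 × 2 × ⋯ × 2` parallelepiped of the cube `{0,…,2^n−1}^d`. -/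
def centralBox (d n : ℕ) (h : 0 < d) : Set (Fin d → ℕ) :=
  {p | p ⟨0, h⟩ ∈ Set.Icc (2 ^ (n - 1) - 2) (2 ^ (n - 1) + 1) ∧
       ∀ j, j ≠ ⟨0, h⟩ → p j = 2 ^ (n - 1) - 1 ∨ p j = 2 ^ (n - 1)}

open Finset Function

theorem sum_fin_ite_testBit_two_pow {d β : ℕ} (hβ : β < 2 ^ d) :
    ∑ j : Fin d, (if β.testBit j then 2 ^ (j : ℕ) else 0) = β := by
  rw [Fin.sum_univ_eq_sum_range (fun i => if β.testBit i then 2 ^ i else 0), ← sum_filter]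
  convert sum_toFinset_bitIndices_two_pow β using 2
  ext i
  simp only [mem_filter, mem_range, List.mem_toFinset, Nat.mem_bitIndices, and_iff_right_iff_imp]
  intro hi
  by_contra! hdi
  simp [Nat.testBit_lt_two_pow (hβ.trans_le (Nat.pow_le_pow_right two_pos hdi))] at hi

theorem testBit_two_pow_sub_one_xor {d j : ℕ} (hj : j < d) (α : ℕ) :
    ((2 ^ d - 1) ^^^ α).testBit j = !α.testBit j := by
  simp [Nat.testBit_xor, Nat.testBit_two_pow_sub_one, hj]

theorem two_pow_sub_one_xor_lt {d α : ℕ} (hα : α < 2 ^ d) : (2 ^ d - 1) ^^^ α < 2 ^ d :=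
  Nat.xor_lt_two_pow (Nat.sub_lt (Nat.two_pow_pos d) one_pos) hα

theorem Nat.testBit_one (k : ℕ) : Nat.testBit 1 k = decide (k = 0) :=
  Bool.eq_iff_iff.mpr (by simp [Nat.testBit_one_eq_true_iff_self_eq_zero])

theorem zord_eq_of_testBit {d n m β : ℕ} {p : Fin d → ℕ} (hβ : β < 2 ^ d)
    (hp : ∀ j : Fin d, (p j).testBit (n - 1 - m) = β.testBit j) : zord d n p m = β := by
  simp only [zord, hp, sum_fin_ite_testBit_two_pow hβ]

theorem eq_or_eq_update_iff {ι β : Type*} [DecidableEq ι] {f p : ι → β} {i : ι} {b : β} :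
    p = f ∨ p = update f i b ↔ (p i = f i ∨ p i = b) ∧ ∀ j ≠ i, p j = f j := by
  have hf : p = f ↔ p i = f i ∧ ∀ j ≠ i, p j = f j := by
    simpa only [update_eq_self] using eq_update_iff (g := p) (f := f) (a := i) (b := f i)
  rw [hf, eq_update_iff, ← or_and_right]

theorem eq_ite_iff_of_mem_pair {N x : ℕ} (hN : 0 < N) (a : Bool) :
    ((x = N - 1 ∨ x = N) ∧ (a ↔ N ≤ x)) ↔ x = if a then N else N - 1 := by
  cases a <;> simp <;> omega

theorem mem_Icc_iff_eq_or_eq_xor_one {N x : ℕ} (hN : Even N) (hN2 : 2 ≤ N) (a : Bool) :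
    (x ∈ Set.Icc (N - 2) (N + 1) ∧ (a ↔ N ≤ x)) ↔
      x = (if a then N else N - 1) ∨ x = (if a then N else N - 1) ^^^ 1 := by
  cases a
  · have hodd : Odd (N - 1) := Nat.Even.sub_odd (by omega) hN odd_one
    simp only [Bool.false_eq_true, false_iff, if_false, Nat.xor_one_of_odd hodd, Set.mem_Icc]
    omega
  · simp only [true_iff, if_true, Nat.xor_one_of_even hN, Set.mem_Icc]
    omega

theorem ne_update_xor_one {ι : Type*} [DecidableEq ι] (f : ι → ℕ) (i : ι) :
    f ≠ update f i (f i ^^^ 1) := by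
  intro hf
  have := congrArg (f i ^^^ ·) (congrFun hf i)
  simp at this

section

variable {d : ℕ}

def centralCubePoint (n α : ℕ) (j : Fin d) : ℕ :=
  if α.testBit j then 2 ^ (n - 1) else 2 ^ (n - 1) - 1

theorem testBit_centralCubePoint {n k : ℕ} (hk : k < n) (α : ℕ) (j : Fin d) :
    (centralCubePoint n α j).testBit k = if k = n - 1 then α.testBit j else !α.testBit j := by
  unfold centralCubePoint
  split_ifs with hj hkn hkn <;>
    simp [Nat.testBit_two_pow, Nat.testBit_two_pow_sub_one, hj] <;> omega

theorem octant_centralBox_eq_pair {n : ℕ} (hn : 2 ≤ n) (h : 0 < d) (α : ℕ) :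
    {p ∈ centralBox d n h | ∀ j : Fin d, (α.testBit (j : ℕ) ↔ 2 ^ (n - 1) ≤ p j)} =
      {centralCubePoint n α,
        update (centralCubePoint n α) ⟨0, h⟩ (centralCubePoint n α ⟨0, h⟩ ^^^ 1)} := by
  have hN : Even (2 ^ (n - 1)) := Nat.even_pow.mpr ⟨even_two, by omega⟩
  have hN2 : 2 ≤ 2 ^ (n - 1) := Nat.le_self_pow (by omega) 2
  have hrest (j : Fin d) (p : Fin d → ℕ) :
      ((p j = 2 ^ (n - 1) - 1 ∨ p j = 2 ^ (n - 1)) ∧ (α.testBit j ↔ 2 ^ (n - 1) ≤ p j)) ↔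
        p j = centralCubePoint n α j :=
    eq_ite_iff_of_mem_pair (by omega) _
  ext p
  simp only [centralBox, Set.mem_ofPred_eq, Set.mem_insert_iff, Set.mem_singleton_iff,
    eq_or_eq_update_iff, centralCubePoint, ← mem_Icc_iff_eq_or_eq_xor_one hN hN2]
  constructor
  · rintro ⟨⟨h0, hbox⟩, hoct⟩
    exact ⟨⟨h0, hoct ⟨0, h⟩⟩, fun j hj => (hrest j p).1 ⟨hbox j hj, hoct j⟩⟩
  · rintro ⟨⟨h0, hoct0⟩, hq⟩
    refine ⟨⟨h0, fun j hj => ((hrest j p).2 (hq j hj)).1⟩, fun j => ?_⟩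
    by_cases hj : j = ⟨0, h⟩
    · subst hj
      exact hoct0
    · exact ((hrest j p).2 (hq j hj)).2

theorem zord_centralCubePoint {n m α : ℕ} (hα : α < 2 ^ d) (hm : m < n) :
    zord d n (centralCubePoint n α) m = if m = 0 then α else (2 ^ d - 1) ^^^ α := by
  split_ifs with hm0
  · refine zord_eq_of_testBit hα fun j => ?_
    rw [testBit_centralCubePoint (by omega), if_pos (by omega)]
  · refine zord_eq_of_testBit (two_pow_sub_one_xor_lt hα) fun j => ?_
    rw [testBit_centralCubePoint (by omega), if_neg (by omega),
      testBit_two_pow_sub_one_xor j.isLt]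

theorem zord_update_of_testBit_eq {n m x : ℕ} {p : Fin d → ℕ} {i : Fin d}
    (hx : x.testBit (n - 1 - m) = (p i).testBit (n - 1 - m)) :
    zord d n (update p i x) m = zord d n p m := by
  unfold zord
  congr! 3 with j
  rcases eq_or_ne j i with rfl | hj
  · rw [update_self, hx]
  · rw [update_of_ne hj]

theorem zord_update_centralCubePoint {n m α : ℕ} (hn : 2 ≤ n) (h : 0 < d) (hα : α < 2 ^ d)
    (hm : m < n) :
    zord d n (update (centralCubePoint n α) ⟨0, h⟩ (centralCubePoint n α ⟨0, h⟩ ^^^ 1)) m =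
      if m = 0 then α
      else if m = n - 1 then ((2 ^ d - 1) ^^^ α) ^^^ 1
      else (2 ^ d - 1) ^^^ α := by
  rcases eq_or_ne m (n - 1) with rfl | hmn
  · rw [if_neg (by omega), if_pos rfl]
    refine zord_eq_of_testBit
      (Nat.xor_lt_two_pow (two_pow_sub_one_xor_lt hα) (Nat.one_lt_two_pow h.ne')) fun j => ?_
    rw [Nat.sub_self, Nat.testBit_xor, testBit_two_pow_sub_one_xor j.isLt, Nat.testBit_one]
    rcases eq_or_ne j ⟨0, h⟩ with rfl | hj
    · rw [update_self, Nat.testBit_xor, testBit_centralCubePoint (by omega), if_neg (by omega),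
        Nat.testBit_one]
    · rw [update_of_ne hj, testBit_centralCubePoint (by omega), if_neg (by omega),
        decide_eq_false (Fin.val_ne_of_ne hj), Bool.xor_false]
  · rw [if_neg hmn, ← zord_centralCubePoint hα hm]
    apply zord_update_of_testBit_eq
    rw [Nat.testBit_xor, Nat.testBit_one, decide_eq_false (by omega), Bool.xor_false]

end

theorem stmt_14_general (d n : ℕ) (hn : 2 ≤ n) (h : 0 < d)
    (α : ℕ) (hα : α < 2 ^ d) :
    ∃ q₁ q₂ : Fin d → ℕ, q₁ ≠ q₂ ∧
      {p ∈ centralBox d n h |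
        ∀ j : Fin d, (α.testBit (j : ℕ) ↔ 2 ^ (n - 1) ≤ p j)} = {q₁, q₂} ∧
      (∀ m < n, zord d n q₁ m = if m = 0 then α else (2 ^ d - 1) ^^^ α) ∧
      (∀ m < n, zord d n q₂ m =
        if m = 0 then α
        else if m = n - 1 then ((2 ^ d - 1) ^^^ α) ^^^ 1
        else (2 ^ d - 1) ^^^ α) :=
  ⟨_, _, ne_update_xor_one _ _, octant_centralBox_eq_pair hn h α,
    fun _ hm => zord_centralCubePoint hα hm, fun _ hm => zord_update_centralCubePoint hn h hα hm⟩

theorem stmt_14 (d n : ℕ) (hd : 2 ≤ d) (hn : 2 ≤ n) (h : 0 < d)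
    (α : ℕ) (hα : α < 2 ^ d) :
    ∃ q₁ q₂ : Fin d → ℕ, q₁ ≠ q₂ ∧
      {p ∈ centralBox d n h |
        ∀ j : Fin d, (α.testBit (j : ℕ) ↔ 2 ^ (n - 1) ≤ p j)} = {q₁, q₂} ∧
      (∀ m < n, zord d n q₁ m = if m = 0 then α else (2 ^ d - 1) ^^^ α) ∧
      (∀ m < n, zord d n q₂ m =
        if m = 0 then α
        else if m = n - 1 then ((2 ^ d - 1) ^^^ α) ^^^ 1
        else (2 ^ d - 1) ^^^ α) :=
  stmt_14_general d n hn h α hα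
end
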